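/- arXiv:2508.01920 — 2 statements merged into one kernel-verified Lean document; each statement's English description precedes it below -/
import Mathlib

section
/- Let G be a finite DAG and let a, b be non-adjacent vertices with b not an ancestor of a. Then the parent set pa(b) of b d-separates a and b. -/
/-- A d-connecting (active) path between `a` and `b` given conditioning set `S`. -/
def ActivePath {V : Type*} (E : V → V → Prop) (S : Set V) (a b : V) : Prop :=
  ∃ (n : ℕ) (f : ℕ → V), f 0 = a ∧ f n = b ∧
    (∀ i < n, E (f i) (f (i + 1)) ∨ E (f (i + 1)) (f i)) ∧
    (∀ i, 0 < i → i < n →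
      ((E (f (i - 1)) (f i) ∧ E (f (i + 1)) (f i)) →
        ∃ d ∈ S, Relation.ReflTransGen E (f i) d) ∧
      (¬(E (f (i - 1)) (f i) ∧ E (f (i + 1)) (f i)) → f i ∉ S))

/-- `S` d-separates `a` and `b` iff there is no active path between them given `S`. -/
def DSep {V : Type*} (E : V → V → Prop) (S : Set V) (a b : V) : Prop :=
  ¬ ActivePath E S a b

/-- In a finite DAG, if `a` and `b` are non-adjacent and `b` is not an ancestor
of `a`, then the parent set of `b` d-separates `a` and `b`. -/
theorem parents_dsep_of_nonadjacent
    {V : Type*} [Fintype V] (E : V → V → Prop)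
    (hacyclic : ∀ v : V, ¬ Relation.TransGen E v v)
    (a b : V) (hab : a ≠ b)
    (hnadj : ¬ E a b ∧ ¬ E b a)
    (hnoanc : ¬ Relation.TransGen E b a) :
    DSep E {x : V | E x b} a b := by
  rintro ⟨n, f, h0, hn, hedge, hint⟩
  -- n = 0 gives a = b; n = 1 gives adjacency; so n ≥ 2.
  rcases Nat.lt_or_ge n 2 with hlt | hn2
  · interval_cases n
    · exact hab (h0 ▸ hn ▸ rfl)
    · rcases hedge 0 (by norm_num) with h | h
      · exact hnadj.1 (h0 ▸ hn ▸ h)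
      · exact hnadj.2 (h0 ▸ hn ▸ h)
  -- cycle-making helper: b →⁺ x, x →* d, d ∈ pa(b)  ⇒ cycle through b
  have cyc : ∀ x : V, Relation.TransGen E b x →
      (∃ d ∈ {x : V | E x b}, Relation.ReflTransGen E x d) → False := by
    rintro x hbx ⟨d, hd, hxd⟩
    exact hacyclic b (hbx.trans (Relation.TransGen.tail' hxd hd))
  -- key: the path from b back to a is a directed chain out of b
  have key : ∀ m, m ≤ n - 2 →
      Relation.TransGen E b (f (n - 1 - m)) ∧ E (f (n - 1 - m)) (f (n - 2 - m)) := by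
    intro m
    induction m with
    | zero =>
      intro _
      have e0 : n - 1 - 0 = n - 1 := by omega
      have e1 : n - 1 - 1 = n - 2 := by omega
      have e2 : n - 1 + 1 = n := by omega
      have e3 : n - 2 - 0 = n - 2 := by omega
      rw [e0, e3]
      obtain ⟨hcol, hncol⟩ := hint (n - 1) (by omega) (by omega)
      rw [e1, e2, hn] at hcol hncol
      have hEb : E b (f (n - 1)) := by
        rcases hedge (n - 1) (by omega) with h | h
        · rw [e2, hn] at h
          -- f(n-1) ∈ pa(b); cannot be a collider (would give 2-cycle), noncollider forbidden
          by_cases hc : E (f (n - 2)) (f (n - 1)) ∧ E b (f (n - 1))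
          · exact absurd (hacyclic b ((Relation.TransGen.single hc.2).tail h)) (fun t => t)
          · exact absurd h (hncol hc)
        · rwa [e2, hn] at h
      refine ⟨Relation.TransGen.single hEb, ?_⟩
      by_cases hc : E (f (n - 2)) (f (n - 1))
      · exact absurd (cyc _ (Relation.TransGen.single hEb) (hcol ⟨hc, hEb⟩)) (fun t => t)
      · have e4 : n - 2 + 1 = n - 1 := by omega
        rcases hedge (n - 2) (by omega) with h | h
        · rw [e4] at h; exact absurd h hc
        · rwa [e4] at h
    | succ m ih =>
      intro hm
      obtain ⟨hb, hE⟩ := ih (by omega)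
      set j := n - 1 - m with hj
      have e0 : n - 1 - (m + 1) = j - 1 := by omega
      have e1 : n - 2 - (m + 1) = j - 2 := by omega
      have e2 : n - 2 - m = j - 1 := by omega
      rw [e2] at hE
      rw [e0, e1]
      have hj2 : 2 ≤ j := by omega
      obtain ⟨hcol, hncol⟩ := hint (j - 1) (by omega) (by omega)
      have ej1 : j - 1 - 1 = j - 2 := by omega
      have ej2 : j - 1 + 1 = j := by omega
      rw [ej1, ej2] at hcol hncol
      have hbj1 : Relation.TransGen E b (f (j - 1)) := hb.tail hE
      refine ⟨hbj1, ?_⟩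
      by_cases hc : E (f (j - 2)) (f (j - 1))
      · exact absurd (cyc _ hbj1 (hcol ⟨hc, hE⟩)) (fun t => t)
      · have e4 : j - 2 + 1 = j - 1 := by omega
        rcases hedge (j - 2) (by omega) with h | h
        · rw [e4] at h; exact absurd h hc
        · rwa [e4] at h
  obtain ⟨hb1, hE1⟩ := key (n - 2) le_rfl
  have e5 : n - 1 - (n - 2) = 1 := by omega
  have e6 : n - 2 - (n - 2) = 0 := by omega
  rw [e5] at hb1
  rw [e5, e6, h0] at hE1
  exact hnoanc (hb1.tail hE1)
end

section
/- Consider an oracle edge-deletion procedure: start from the complete candidate graph with edges (u,s) → (v, 2τ+1) for all u,v ∈ {1,…,p}, s ∈ {τ+1,…,2τ+1}, and delete an edge (u,s) → (v,2τ+1) iff there exists S ⊆ {(d,r) : 1 ≤ d ≤ p, 1 ≤ r ≤ 2τ+1} \ {(u,s),(v,2τ+1)} with X_{u,s} ⫫ X_{v,2τ+1} | X_S. Under the τ-order Markov, global Markov, and faithfulness assumptions, the surviving edges with s < 2τ+1 are exactly the lagged edges of the true unrolled DAG G into the nodes (v, 2τ+1). -/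
private lemma chain_rtg {V : Type*} (E : V → V → Prop) (f : ℕ → V) :
    ∀ m n i, n = i + m → (∀ j, i ≤ j → j < n → E (f (j + 1)) (f j)) →
      Relation.ReflTransGen E (f n) (f i) := by
  intro m
  induction m with
  | zero => intro n i h _; subst h; exact Relation.ReflTransGen.refl
  | succ m ih =>
    intro n i h hQ
    have h1 : Relation.ReflTransGen E (f n) (f (i + 1)) :=
      ih n (i + 1) (by omega) (fun j hj hjn => hQ j (by omega) hjn)
    exact h1.tail (hQ i le_rfl (by omega))

private lemma rtg_time {p : ℕ} (Edge : (Fin p × ℤ) → (Fin p × ℤ) → Prop)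
    (htime : ∀ w₁ w₂ : Fin p × ℤ, Edge w₁ w₂ → w₁.2 ≤ w₂.2) :
    ∀ x y : Fin p × ℤ, Relation.ReflTransGen Edge x y → x.2 ≤ y.2 := by
  intro x y h
  induction h with
  | refl => exact le_rfl
  | tail h1 h2 ih => exact le_trans ih (htime _ _ h2)

/-- CITS-Oracle recovery of lagged edges: starting from the complete candidate
graph into time `2τ+1`, an edge `(u,s) → (v,2τ+1)` with `s < 2τ+1` is deleted
iff some conditioning set within the window `{1,…,2τ+1}` renders the pair
conditionally independent; under the `τ`-order Markov, global Markov, and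
faithfulness assumptions, the surviving lagged edges are exactly the lagged
edges of the true unrolled DAG. -/
theorem cits_oracle_recovers_lagged_edges
    {p : ℕ} (τ : ℕ) (Edge : (Fin p × ℤ) → (Fin p × ℤ) → Prop)
    (CI : (Fin p × ℤ) → (Fin p × ℤ) → Set (Fin p × ℤ) → Prop)
    (hacyclic : ∀ w : Fin p × ℤ, ¬ Relation.TransGen Edge w w)
    (htime : ∀ w₁ w₂ : Fin p × ℤ, Edge w₁ w₂ → w₁.2 ≤ w₂.2)
    (hlag : ∀ w₁ w₂ : Fin p × ℤ, Edge w₁ w₂ → w₂.2 - (τ : ℤ) ≤ w₁.2)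
    (markov : ∀ a b : Fin p × ℤ, ∀ S : Set (Fin p × ℤ),
      a ∉ S → b ∉ S → DSep Edge S a b → CI a b S)
    (faithful : ∀ a b : Fin p × ℤ, ∀ S : Set (Fin p × ℤ),
      a ∉ S → b ∉ S → CI a b S → DSep Edge S a b) :
    ∀ (u v : Fin p) (s : ℤ), (τ : ℤ) + 1 ≤ s → s ≤ 2 * (τ : ℤ) →
      ((¬ ∃ S : Set (Fin p × ℤ),
          S ⊆ {w : Fin p × ℤ | 1 ≤ w.2 ∧ w.2 ≤ 2 * (τ : ℤ) + 1} \
              {(u, s), (v, 2 * (τ : ℤ) + 1)} ∧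
          CI (u, s) (v, 2 * (τ : ℤ) + 1) S) ↔
        Edge (u, s) (v, 2 * (τ : ℤ) + 1)) := by
  classical
  intro u v s hs1 hs2
  set t : ℤ := 2 * (τ : ℤ) + 1 with ht
  set b : Fin p × ℤ := (v, t) with hbdef
  set a : Fin p × ℤ := (u, s) with hadef
  have hab : a ≠ b := by
    intro h
    have : s = t := congrArg Prod.snd h
    omega
  have hbb : ¬ Edge b b := fun h => hacyclic b (Relation.TransGen.single h)
  constructor
  · -- no separating set ⇒ edge
    intro hno
    by_contra hE
    apply hno
    refine ⟨{w | Edge w b}, ?_, ?_⟩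
    · intro w hw
      simp only [Set.mem_setOf_eq] at hw
      have h1 := hlag w b hw
      have h2 := htime w b hw
      simp only [hbdef] at h1 h2
      constructor
      · exact ⟨by omega, by omega⟩
      · intro hmem
        rcases hmem with h | h
        · exact hE (h ▸ hw)
        · exact hbb (h ▸ hw)
    · apply markov
      · exact hE
      · exact hbb
      · -- Pa(b) d-separates a and b
        rintro ⟨n, f, h0, hn, hedges, hint⟩
        have hn1 : 1 ≤ n := by
          rcases Nat.eq_zero_or_pos n with h | h
          · subst h; exact absurd (h0 ▸ hn) hab
          · exact h
        have hlast := hedges (n - 1) (by omega)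
        rw [show n - 1 + 1 = n from by omega, hn] at hlast
        rcases hlast with hA | hB
        · -- last edge points into b: f(n-1) ∈ Pa(b), non-collider, contradiction
          by_cases hn2 : n = 1
          · have : f 0 = f (n - 1) := by rw [hn2]
            rw [h0] at this
            exact hE (this ▸ hA)
          · have hi := (hint (n - 1) (by omega) (by omega)).2
            have hnc : ¬(Edge (f (n - 1 - 1)) (f (n - 1)) ∧
                Edge (f (n - 1 + 1)) (f (n - 1))) := by
              rintro ⟨-, h2⟩
              rw [show n - 1 + 1 = n from by omega, hn] at h2
              exact hacyclic b ((Relation.TransGen.single h2).tail hA)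
            exact hi hnc hA
        · -- last edge points out of b
          have hQ : ∀ j, n - 1 ≤ j → j < n → Edge (f (j + 1)) (f j) := by
            intro j hj1 hj2
            have hj : j = n - 1 := by omega
            subst hj
            rw [show n - 1 + 1 = n from by omega, hn]
            exact hB
          have hPex : ∃ i, ∀ j, i ≤ j → j < n → Edge (f (j + 1)) (f j) := ⟨n - 1, hQ⟩
          set k := Nat.find hPex with hkdef
          have hPk : ∀ j, k ≤ j → j < n → Edge (f (j + 1)) (f j) := Nat.find_spec hPex
          have hk_le : k ≤ n - 1 := Nat.find_min' hPex hQ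
          by_cases hk0 : k = 0
          · have hc : Relation.ReflTransGen Edge (f n) (f 0) :=
              chain_rtg Edge f n n 0 (by omega) (hk0 ▸ hPk)
            rw [h0, hn] at hc
            have := rtg_time Edge htime b a hc
            simp only [hbdef, hadef] at this
            omega
          · have hkpos : 0 < k := Nat.pos_of_ne_zero hk0
            have hnotP : ¬ ∀ j, k - 1 ≤ j → j < n → Edge (f (j + 1)) (f j) :=
              Nat.find_min hPex (by omega)
            push_neg at hnotP
            obtain ⟨j, hj1, hj2, hj3⟩ := hnotP
            have hjk : j = k - 1 := by
              by_contra h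
              exact hj3 (hPk j (by omega) hj2)
            subst hjk
            rw [show k - 1 + 1 = k from by omega] at hj3
            have hedge := hedges (k - 1) (by omega)
            rw [show k - 1 + 1 = k from by omega] at hedge
            have hEk : Edge (f (k - 1)) (f k) := hedge.resolve_right hj3
            have hcol := (hint k hkpos (by omega)).1 ⟨hEk, hPk k le_rfl (by omega)⟩
            obtain ⟨d, hdS, hdrtg⟩ := hcol
            have hbk : Relation.ReflTransGen Edge (f n) (f k) :=
              chain_rtg Edge f (n - k) n k (by omega) hPk
            rw [hn] at hbk
            exact hacyclic b (Relation.TransGen.tail' (hbk.trans hdrtg) hdS)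
  · -- edge ⇒ no separating set (the edge itself is an active path)
    rintro hE ⟨S, hSsub, hCI⟩
    have haS : a ∉ S := fun h => (hSsub h).2 (Or.inl rfl)
    have hbS : b ∉ S := fun h => (hSsub h).2 (Or.inr rfl)
    refine faithful a b S haS hbS hCI ⟨1, fun i => if i = 0 then a else b, by simp, by simp, ?_, ?_⟩
    · intro i hi
      have : i = 0 := by omega
      subst this
      left
      simpa using hE
    · intro i hi1 hi2
      omega
end
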